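/- arXiv:1011.1980 — 3 statements merged into one kernel-verified Lean document; each statement's English description precedes it below -/
import Mathlib

section
/- Let S be a finite set, let P be an irreducible stochastic matrix on S, and let X be a nonempty subset of S. Define the watched-chain matrix on X by (P̄)_{ss'} := P_{ss'} + Σ_{n=0}^∞ Σ_{s_0,s_1,…,s_n ∈ S∖X} P_{s s_0} (Π_{l=1}^n P_{s_{l-1} s_l}) P_{s_n s'} for s,s' ∈ X. Then P̄ is irreducible on X: for every pair s,s' ∈ X there exists n ≥ 1 with (P̄^n)_{ss'} > 0. -/
open Finset

/-- The sum over all `(n+1)`-tuples of states lying in `Y` of the product of transition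
probabilities along the corresponding path `s → s₀ → s₁ → ⋯ → sₙ → s'`. -/
noncomputable def tupSum {S : Type*} [Fintype S] [DecidableEq S]
    (P : Matrix S S ℝ) (Y : Finset S) (s s' : S) (n : ℕ) : ℝ :=
  ∑ f : Fin (n + 1) → S,
    if ∀ i, f i ∈ Y then
      P s (f 0) * (∏ i : Fin n, P (f i.castSucc) (f i.succ)) * P (f (Fin.last n)) s'
    else 0

/-- The watched-chain ("observed only on `X`") transition kernel
`P̄ s s' = P s s' + ∑_{n=0}^∞ ∑_{s₀,…,sₙ ∈ S∖X} P s s₀ (∏ P s_{l-1} s_l) P sₙ s'`. -/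
noncomputable def watched {S : Type*} [Fintype S] [DecidableEq S]
    (P : Matrix S S ℝ) (X : Finset S) (s s' : S) : ℝ :=
  P s s' + ∑' n : ℕ, tupSum P Xᶜ s s' n

/-- The watched chain as a matrix indexed by the subset `X`. -/
noncomputable def watchedMatrix {S : Type*} [Fintype S] [DecidableEq S]
    (P : Matrix S S ℝ) (X : Finset S) : Matrix X X ℝ :=
  Matrix.of fun s s' => watched P X (s : S) (s' : S)

set_option linter.unusedSectionVars false
set_option linter.unusedVariables false
set_option maxHeartbeats 1600000

section Aux
variable {S : Type*} [Fintype S] [DecidableEq S]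

/-- substochastic kernel of steps landing outside `X` -/
noncomputable def NX (P : Matrix S S ℝ) (X : Finset S) : Matrix S S ℝ :=
  Matrix.of fun u v => if v ∈ X then 0 else P u v

lemma NX_nonneg (P : Matrix S S ℝ) (hP : ∀ s s', 0 ≤ P s s') (X : Finset S) (u v : S) :
    0 ≤ NX P X u v := by
  unfold NX; simp only [Matrix.of_apply]; split_ifs with h
  · exact le_rfl
  · exact hP u v

lemma NX_le (P : Matrix S S ℝ) (hP : ∀ s s', 0 ≤ P s s') (X : Finset S) (u v : S) :
    NX P X u v ≤ P u v := by
  unfold NX; simp only [Matrix.of_apply]; split_ifs with h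
  · exact hP u v
  · exact le_rfl

lemma NX_apply_notMem (P : Matrix S S ℝ) (X : Finset S) (u v : S) (h : v ∉ X) :
    NX P X u v = P u v := by
  unfold NX; simp only [Matrix.of_apply, if_neg h]

lemma NX_apply_mem (P : Matrix S S ℝ) (X : Finset S) (u v : S) (h : v ∈ X) :
    NX P X u v = 0 := by
  unfold NX; simp only [Matrix.of_apply, if_pos h]

lemma pow_entry_nonneg {T : Type*} [Fintype T] [DecidableEq T] (A : Matrix T T ℝ)
    (hA : ∀ a b, 0 ≤ A a b) : ∀ n a b, 0 ≤ (A ^ n) a b := by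
  intro n
  induction n with
  | zero => intro a b; simp only [pow_zero, Matrix.one_apply]; split_ifs <;> norm_num
  | succ n ih =>
    intro a b
    rw [pow_succ, Matrix.mul_apply]
    exact Finset.sum_nonneg fun c _ => mul_nonneg (ih a c) (hA c b)

lemma mul_entry_nonneg {T : Type*} [Fintype T] (A B : Matrix T T ℝ)
    (hA : ∀ a b, 0 ≤ A a b) (hB : ∀ a b, 0 ≤ B a b) (a b : T) : 0 ≤ (A * B) a b := by
  rw [Matrix.mul_apply]
  exact Finset.sum_nonneg fun c _ => mul_nonneg (hA a c) (hB c b)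

lemma pow_entry_le {T : Type*} [Fintype T] [DecidableEq T] (A B : Matrix T T ℝ)
    (hA : ∀ a b, 0 ≤ A a b) (hAB : ∀ a b, A a b ≤ B a b) :
    ∀ n a b, (A ^ n) a b ≤ (B ^ n) a b := by
  intro n
  induction n with
  | zero => intro a b; simp
  | succ n ih =>
    intro a b
    rw [pow_succ, pow_succ, Matrix.mul_apply, Matrix.mul_apply]
    refine Finset.sum_le_sum fun c _ => ?_
    exact mul_le_mul (ih a c) (hAB c b) (hA c b)
      (le_trans (pow_entry_nonneg A hA n a c) (ih a c))

lemma rowSum_mul (A B : Matrix S S ℝ) (u : S) :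
    ∑ v, (A * B) u v = ∑ w, A u w * ∑ v, B w v := by
  simp only [Matrix.mul_apply, Finset.mul_sum]
  rw [Finset.sum_comm]

lemma rowSum_pow_stochastic (P : Matrix S S ℝ) (hProw : ∀ s, ∑ s', P s s' = 1) :
    ∀ n u, ∑ v, (P ^ n) u v = 1 := by
  intro n
  induction n with
  | zero => intro u; simp [Matrix.one_apply]
  | succ n ih =>
    intro u
    rw [pow_succ', rowSum_mul]
    simp [ih, hProw]

lemma pathSum_eq (A : Matrix S S ℝ) (g : S → ℝ) :
    ∀ n (s : S),
      (∑ f : Fin (n + 1) → S,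
        A s (f 0) * (∏ i : Fin n, A (f i.castSucc) (f i.succ)) * g (f (Fin.last n)))
      = ∑ v, (A ^ (n + 1)) s v * g v := by
  intro n
  induction n with
  | zero =>
    intro s
    rw [Fintype.sum_equiv (Equiv.funUnique (Fin 1) S) _ (fun v => A s v * g v) ?_]
    · simp
    · intro f; simp
  | succ n ih =>
    intro s
    rw [← Fintype.sum_equiv (Fin.consEquiv fun _ : Fin (n + 2) => S)
      (fun p : S × (Fin (n + 1) → S) =>
        A s p.1 * (A p.1 (p.2 0) * ∏ i : Fin n, A (p.2 i.castSucc) (p.2 i.succ))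
          * g (p.2 (Fin.last n)))
      _ ?_]
    · rw [Fintype.sum_prod_type]
      have hstep : ∀ a : S,
          (∑ g' : Fin (n + 1) → S,
            A s a * (A a (g' 0) * ∏ i : Fin n, A (g' i.castSucc) (g' i.succ)) * g (g' (Fin.last n)))
          = A s a * ∑ v, (A ^ (n + 1)) a v * g v := by
        intro a
        rw [← ih a, Finset.mul_sum]
        refine Finset.sum_congr rfl fun g' _ => by ring
      calc (∑ a : S, ∑ g' : Fin (n + 1) → S,
            A s a * (A a (g' 0) * ∏ i : Fin n, A (g' i.castSucc) (g' i.succ)) * g (g' (Fin.last n)))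
          = ∑ a : S, A s a * ∑ v, (A ^ (n + 1)) a v * g v := by
            exact Finset.sum_congr rfl fun a _ => hstep a
        _ = ∑ a : S, ∑ v, A s a * ((A ^ (n + 1)) a v * g v) := by
            simp [Finset.mul_sum]
        _ = ∑ v, (∑ a : S, A s a * (A ^ (n + 1)) a v) * g v := by
            rw [Finset.sum_comm]
            exact Finset.sum_congr rfl fun v _ => by rw [Finset.sum_mul]; exact Finset.sum_congr rfl fun a _ => by ring
        _ = ∑ v, (A ^ (n + 2)) s v * g v := by
            refine Finset.sum_congr rfl fun v _ => ?_
            conv_rhs => rw [pow_succ', Matrix.mul_apply]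
    · intro p
      obtain ⟨a, g'⟩ := p
      have h2 : (Fin.cons a g' : Fin (n + 2) → S) (Fin.last (n + 1)) = g' (Fin.last n) := by
        rw [← Fin.succ_last, Fin.cons_succ]
      have h3 : (∏ i : Fin (n + 1),
            A ((Fin.cons a g' : Fin (n + 2) → S) i.castSucc) ((Fin.cons a g' : Fin (n + 2) → S) i.succ))
          = A a (g' 0) * ∏ i : Fin n, A (g' i.castSucc) (g' i.succ) := by
        rw [Fin.prod_univ_succ]
        have hfac : ∀ i : Fin n,
            A ((Fin.cons a g' : Fin (n + 2) → S) i.succ.castSucc)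
              ((Fin.cons a g' : Fin (n + 2) → S) i.succ.succ)
            = A (g' i.castSucc) (g' i.succ) := fun i => by
          rw [← Fin.succ_castSucc, Fin.cons_succ, Fin.cons_succ]
        rw [Finset.prod_congr rfl fun i _ => hfac i]
        rfl
      simp only [Fin.consEquiv_apply]
      rw [Fin.cons_zero, h2, h3]

lemma rowSum_NX_le_one (P : Matrix S S ℝ) (hPnn : ∀ s s', 0 ≤ P s s')
    (hProw : ∀ s, ∑ s', P s s' = 1) (X : Finset S) (u : S) :
    ∑ v, NX P X u v ≤ 1 := by
  calc ∑ v, NX P X u v ≤ ∑ v, P u v := Finset.sum_le_sum fun v _ => NX_le P hPnn X u v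
    _ = 1 := hProw u

lemma rowSum_NX_pow_anti (P : Matrix S S ℝ) (hPnn : ∀ s s', 0 ≤ P s s')
    (hProw : ∀ s, ∑ s', P s s' = 1) (X : Finset S) (u : S) :
    ∀ {m n : ℕ}, m ≤ n → ∑ v, (NX P X ^ n) u v ≤ ∑ v, (NX P X ^ m) u v := by
  have step : ∀ n, ∑ v, (NX P X ^ (n + 1)) u v ≤ ∑ v, (NX P X ^ n) u v := by
    intro n
    rw [pow_succ, rowSum_mul]
    calc ∑ w, (NX P X ^ n) u w * ∑ v, NX P X w v
        ≤ ∑ w, (NX P X ^ n) u w * 1 :=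
          Finset.sum_le_sum fun w _ => mul_le_mul_of_nonneg_left
            (rowSum_NX_le_one P hPnn hProw X w)
            (pow_entry_nonneg _ (NX_nonneg P hPnn X) n u w)
      _ = ∑ w, (NX P X ^ n) u w := by simp
  intro m n h
  induction n, h using Nat.le_induction with
  | base => exact le_rfl
  | succ n hmn ih => exact le_trans (step n) ih

lemma NX_pow_mem_eq_zero (P : Matrix S S ℝ) (X : Finset S) {x₀ : S} (hx : x₀ ∈ X)
    (n : ℕ) (u : S) : (NX P X ^ (n + 1)) u x₀ = 0 := by
  rw [pow_succ, Matrix.mul_apply]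
  refine Finset.sum_eq_zero fun w _ => ?_
  have : NX P X w x₀ = 0 := by unfold NX; simp only [Matrix.of_apply, if_pos hx]
  rw [this, mul_zero]

lemma summable_geolike {c : ℝ} (hc0 : 0 ≤ c) (hc1 : c < 1) {r : ℕ} (hr : 1 ≤ r) :
    Summable (fun n : ℕ => c ^ ((n + 1) / r)) := by
  apply summable_of_sum_range_le (c := r * (1 - c)⁻¹)
    (fun n => pow_nonneg hc0 _)
  intro M
  have h1 : ∀ n : ℕ, c ^ ((n + 1) / r) ≤ c ^ (n / r) := fun n =>
    pow_le_pow_of_le_one hc0 (le_of_lt hc1) (Nat.div_le_div_right (Nat.le_succ n))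
  calc ∑ n ∈ Finset.range M, c ^ ((n + 1) / r)
      ≤ ∑ n ∈ Finset.range M, c ^ (n / r) := Finset.sum_le_sum fun n _ => h1 n
    _ ≤ r * (1 - c)⁻¹ := by
        rw [Finset.sum_comp (fun k => c ^ k) (fun n => n / r)]
        have hcard : ∀ k, ((Finset.range M).filter fun n => n / r = k).card ≤ r := by
          intro k
          have hsub : ((Finset.range M).filter fun n => n / r = k) ⊆
              Finset.Ico (k * r) (k * r + r) := by
            intro n hn
            simp only [Finset.mem_filter, Finset.mem_range] at hn
            obtain ⟨-, hdiv⟩ := hn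
            rw [Finset.mem_Ico]
            constructor
            · calc k * r = n / r * r := by rw [hdiv]
                _ ≤ n := Nat.div_mul_le_self n r
            · have : n / r < k + 1 := by omega
              have := (Nat.div_lt_iff_lt_mul (by omega : 0 < r)).mp this
              calc n < (k + 1) * r := this
                _ = k * r + r := by ring
          calc ((Finset.range M).filter fun n => n / r = k).card
              ≤ (Finset.Ico (k * r) (k * r + r)).card := Finset.card_le_card hsub
            _ = r := by rw [Nat.card_Ico]; omega
        have himg : (Finset.range M).image (fun n => n / r) ⊆ Finset.range M := by
          intro k hk
          simp only [Finset.mem_image, Finset.mem_range] at hk ⊢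
          obtain ⟨n, hn, rfl⟩ := hk
          exact lt_of_le_of_lt (Nat.div_le_self n r) hn
        calc ∑ k ∈ (Finset.range M).image (fun n => n / r),
              ((Finset.range M).filter fun n => n / r = k).card • c ^ k
            ≤ ∑ k ∈ (Finset.range M).image (fun n => n / r), r * c ^ k := by
              refine Finset.sum_le_sum fun k _ => ?_
              rw [nsmul_eq_mul]
              exact mul_le_mul_of_nonneg_right
                (by exact_mod_cast hcard k) (pow_nonneg hc0 k)
          _ = r * ∑ k ∈ (Finset.range M).image (fun n => n / r), c ^ k := by
              rw [Finset.mul_sum]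
          _ ≤ r * ∑ k ∈ Finset.range M, c ^ k := by
              refine mul_le_mul_of_nonneg_left
                (Finset.sum_le_sum_of_subset_of_nonneg himg
                  (fun k _ _ => pow_nonneg hc0 k)) (by positivity)
          _ ≤ r * (1 - c)⁻¹ := by
              refine mul_le_mul_of_nonneg_left ?_ (by positivity)
              calc ∑ k ∈ Finset.range M, c ^ k
                  ≤ ∑' k : ℕ, c ^ k :=
                    Summable.sum_le_tsum _ (fun k _ => pow_nonneg hc0 k)
                      (summable_geometric_of_lt_one hc0 hc1)
                _ = (1 - c)⁻¹ := tsum_geometric_of_lt_one hc0 hc1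


lemma tupSum_eq_matrix (P : Matrix S S ℝ) (X : Finset S) (s s' : S) (n : ℕ) :
    tupSum P Xᶜ s s' n = ∑ v, (NX P X ^ (n + 1)) s v * P v s' := by
  rw [← pathSum_eq (NX P X) (fun v => P v s') n s]
  unfold tupSum
  refine Finset.sum_congr rfl fun f _ => ?_
  by_cases h : ∀ i, f i ∈ Xᶜ
  · rw [if_pos h]
    have hmem : ∀ i, f i ∉ X := fun i => Finset.mem_compl.mp (h i)
    have e0 : NX P X s (f 0) = P s (f 0) := by
      unfold NX; simp only [Matrix.of_apply, if_neg (hmem 0)]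
    have e1 : ∀ i : Fin n, NX P X (f i.castSucc) (f i.succ) = P (f i.castSucc) (f i.succ) :=
      fun i => by unfold NX; simp only [Matrix.of_apply, if_neg (hmem i.succ)]
    rw [e0, Finset.prod_congr rfl fun i _ => e1 i]
  · rw [if_neg h]
    push_neg at h
    obtain ⟨i, hi⟩ := h
    have hiX : f i ∈ X := by
      by_contra hc; exact hi (Finset.mem_compl.mpr hc)
    rcases Fin.eq_zero_or_eq_succ i with h0 | ⟨j, rfl⟩
    · have : NX P X s (f 0) = 0 := by
        unfold NX; simp only [Matrix.of_apply, if_pos (h0 ▸ hiX)]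
      rw [this, zero_mul, zero_mul]
    · have : NX P X (f j.castSucc) (f j.succ) = 0 := by
        unfold NX; simp only [Matrix.of_apply, if_pos hiX]
      rw [Finset.prod_eq_zero (Finset.mem_univ j) this, mul_zero, zero_mul]

lemma tupSum_nonneg (P : Matrix S S ℝ) (hPnn : ∀ s s', 0 ≤ P s s') (Y : Finset S)
    (s s' : S) (n : ℕ) : 0 ≤ tupSum P Y s s' n := by
  refine Finset.sum_nonneg fun f _ => ?_
  split_ifs with h
  · exact mul_nonneg (mul_nonneg (hPnn _ _)
      (Finset.prod_nonneg fun i _ => hPnn _ _)) (hPnn _ _)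
  · exact le_rfl

lemma tupSum_summable (P : Matrix S S ℝ) (hPnn : ∀ s s', 0 ≤ P s s')
    (hProw : ∀ s, ∑ s', P s s' = 1)
    (hirr : ∀ s s', ∃ n : ℕ, 1 ≤ n ∧ 0 < (P ^ n) s s')
    (X : Finset S) (hX : X.Nonempty) (s s' : S) :
    Summable (fun n => tupSum P Xᶜ s s' n) := by
  obtain ⟨x₀, hx₀⟩ := hX
  have hSne : Nonempty S := ⟨x₀⟩
  set N := NX P X with hN
  have hNnn : ∀ a b, 0 ≤ N a b := NX_nonneg P hPnn X
  -- reach times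
  have hchoice : ∀ u : S, ∃ n : ℕ, 1 ≤ n ∧ 0 < (P ^ n) u x₀ := fun u => hirr u x₀
  choose m hm1 hmpos using hchoice
  set r := Finset.univ.sup m with hr
  have hrm : ∀ u, m u ≤ r := fun u => Finset.le_sup (Finset.mem_univ u)
  have hr1 : 1 ≤ r := le_trans (hm1 x₀) (hrm x₀)
  set c := Finset.univ.sup' Finset.univ_nonempty (fun u => ∑ v, (N ^ r) u v) with hc
  have hc0 : 0 ≤ c := by
    refine le_trans ?_ (Finset.le_sup' _ (Finset.mem_univ x₀))
    exact Finset.sum_nonneg fun v _ => pow_entry_nonneg N hNnn r x₀ v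
  have hc1 : c < 1 := by
    rw [hc, Finset.sup'_lt_iff]
    intro u _
    have h1 : ∑ v, (N ^ r) u v ≤ ∑ v, (N ^ (m u)) u v :=
      rowSum_NX_pow_anti P hPnn hProw X u (hrm u)
    refine lt_of_le_of_lt h1 ?_
    -- row sum of N^(m u) at u is < 1
    obtain ⟨k, hk⟩ : ∃ k, m u = k + 1 := ⟨m u - 1, by have := hm1 u; omega⟩
    have hzero : (N ^ (m u)) u x₀ = 0 := by rw [hk]; exact NX_pow_mem_eq_zero P X hx₀ k u
    have hsplit : ∑ v, (N ^ (m u)) u v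
        = ∑ v ∈ Finset.univ.erase x₀, (N ^ (m u)) u v := by
      rw [← Finset.add_sum_erase _ _ (Finset.mem_univ x₀), hzero, zero_add]
    have hsplitP : ∑ v, (P ^ (m u)) u v
        = (P ^ (m u)) u x₀ + ∑ v ∈ Finset.univ.erase x₀, (P ^ (m u)) u v := by
      rw [← Finset.add_sum_erase _ _ (Finset.mem_univ x₀)]
    have hle : ∑ v ∈ Finset.univ.erase x₀, (N ^ (m u)) u v
        ≤ ∑ v ∈ Finset.univ.erase x₀, (P ^ (m u)) u v :=
      Finset.sum_le_sum fun v _ => pow_entry_le N P hNnn (NX_le P hPnn X) (m u) u v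
    have hPsum : ∑ v, (P ^ (m u)) u v = 1 := rowSum_pow_stochastic P hProw (m u) u
    have := hmpos u
    calc ∑ v, (N ^ (m u)) u v = ∑ v ∈ Finset.univ.erase x₀, (N ^ (m u)) u v := hsplit
      _ ≤ ∑ v ∈ Finset.univ.erase x₀, (P ^ (m u)) u v := hle
      _ = 1 - (P ^ (m u)) u x₀ := by rw [← hPsum, hsplitP]; ring
      _ < 1 := by linarith
  -- geometric decay along multiples of r
  have hgeo : ∀ k u, ∑ v, (N ^ (r * k)) u v ≤ c ^ k := by
    intro k
    induction k with
    | zero =>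
      intro u
      simp only [Nat.mul_zero, pow_zero]
      simp [Matrix.one_apply]
    | succ k ih =>
      intro u
      have : r * (k + 1) = r + r * k := by ring
      rw [this, pow_add, rowSum_mul]
      calc ∑ w, (N ^ r) u w * ∑ v, (N ^ (r * k)) w v
          ≤ ∑ w, (N ^ r) u w * c ^ k :=
            Finset.sum_le_sum fun w _ => mul_le_mul_of_nonneg_left (ih w)
              (pow_entry_nonneg N hNnn r u w)
        _ = (∑ w, (N ^ r) u w) * c ^ k := by rw [Finset.sum_mul]
        _ ≤ c * c ^ k := by
              refine mul_le_mul_of_nonneg_right ?_ (pow_nonneg hc0 k)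
              rw [hc]
              exact Finset.le_sup' (fun u => ∑ v, (N ^ r) u v) (Finset.mem_univ u)
        _ = c ^ (k + 1) := by rw [pow_succ]; ring
  -- entrywise bound on tupSum
  have hPle1 : ∀ v w : S, P v w ≤ 1 := by
    intro v w
    calc P v w ≤ ∑ w', P v w' :=
        Finset.single_le_sum (fun w' _ => hPnn v w') (Finset.mem_univ w)
      _ = 1 := hProw v
  have hbound : ∀ n, tupSum P Xᶜ s s' n ≤ c ^ ((n + 1) / r) := by
    intro n
    rw [tupSum_eq_matrix]
    calc ∑ v, (N ^ (n + 1)) s v * P v s'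
        ≤ ∑ v, (N ^ (n + 1)) s v * 1 := Finset.sum_le_sum fun v _ =>
          mul_le_mul_of_nonneg_left (hPle1 v s') (pow_entry_nonneg N hNnn (n + 1) s v)
      _ = ∑ v, (N ^ (n + 1)) s v := by simp
      _ ≤ ∑ v, (N ^ (r * ((n + 1) / r))) s v :=
          rowSum_NX_pow_anti P hPnn hProw X s
            (by rw [mul_comm]; exact Nat.div_mul_le_self (n + 1) r)
      _ ≤ c ^ ((n + 1) / r) := hgeo _ s
  exact Summable.of_nonneg_of_le (fun n => tupSum_nonneg P hPnn _ s s' n) hbound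
    (summable_geolike hc0 hc1 hr1)

lemma pos_factors {a b : ℝ} (ha : 0 ≤ a) (hb : 0 ≤ b) (h : 0 < a * b) : 0 < a ∧ 0 < b := by
  constructor
  · rcases lt_or_eq_of_le ha with h' | h'
    · exact h'
    · exfalso; rw [← h', zero_mul] at h; exact lt_irrefl 0 h
  · rcases lt_or_eq_of_le hb with h' | h'
    · exact h'
    · exfalso; rw [← h', mul_zero] at h; exact lt_irrefl 0 h

lemma exists_pos_term {ι : Type*} {s : Finset ι} {f : ι → ℝ} (hf : ∀ i ∈ s, 0 ≤ f i)
    (h : 0 < ∑ i ∈ s, f i) : ∃ i ∈ s, 0 < f i := by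
  by_contra hc
  push_neg at hc
  have : ∑ i ∈ s, f i ≤ 0 := Finset.sum_nonpos fun i hi => hc i hi
  linarith

lemma watched_nonneg (P : Matrix S S ℝ) (hPnn : ∀ s s', 0 ≤ P s s') (X : Finset S)
    (s s' : S) : 0 ≤ watched P X s s' :=
  add_nonneg (hPnn s s') (tsum_nonneg fun n => tupSum_nonneg P hPnn _ s s' n)

lemma watched_pos_of_direct (P : Matrix S S ℝ) (hPnn : ∀ s s', 0 ≤ P s s') (X : Finset S)
    {s s' : S} (h : 0 < P s s') : 0 < watched P X s s' :=
  add_pos_of_pos_of_nonneg h (tsum_nonneg fun n => tupSum_nonneg P hPnn _ s s' n)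

lemma watched_pos_of_tupSum (P : Matrix S S ℝ) (hPnn : ∀ s s', 0 ≤ P s s')
    (hProw : ∀ s, ∑ s', P s s' = 1)
    (hirr : ∀ s s', ∃ n : ℕ, 1 ≤ n ∧ 0 < (P ^ n) s s')
    (X : Finset S) (hX : X.Nonempty) {s s' : S} {n : ℕ}
    (h : 0 < tupSum P Xᶜ s s' n) : 0 < watched P X s s' :=
  add_pos_of_nonneg_of_pos (hPnn s s')
    (Summable.tsum_pos (tupSum_summable P hPnn hProw hirr X hX s s')
      (fun k => tupSum_nonneg P hPnn _ s s' k) n h)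

/-- From a positive path of length `m+1` into `X`, extract the first entry into `X`. -/
lemma exists_exit (P : Matrix S S ℝ) (hPnn : ∀ s s', 0 ≤ P s s') (X : Finset S) :
    ∀ m (u s' : S), s' ∈ X → 0 < (P ^ (m + 1)) u s' →
      ∃ j w, w ∈ X ∧ j ≤ m ∧ 0 < (NX P X ^ j * P) u w ∧ 0 < (P ^ (m - j)) w s' := by
  intro m
  induction m with
  | zero =>
    intro u s' hs' h
    refine ⟨0, s', hs', le_refl 0, by simpa using h, by simp [Matrix.one_apply]⟩
  | succ m ih =>
    intro u s' hs' h
    rw [pow_succ', Matrix.mul_apply] at h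
    obtain ⟨v, -, hv⟩ := exists_pos_term
      (fun v _ => mul_nonneg (hPnn u v) (pow_entry_nonneg P hPnn (m + 1) v s')) h
    obtain ⟨h1, h2⟩ := pos_factors (hPnn u v) (pow_entry_nonneg P hPnn (m + 1) v s') hv
    by_cases hvX : v ∈ X
    · exact ⟨0, v, hvX, Nat.zero_le _, by simpa using h1, by simpa using h2⟩
    · obtain ⟨j, w, hwX, hjm, hNP, hrest⟩ := ih v s' hs' h2
      refine ⟨j + 1, w, hwX, Nat.succ_le_succ hjm, ?_, ?_⟩
      · have hrw : (NX P X ^ (j + 1) * P) u w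
            = ∑ z, NX P X u z * (NX P X ^ j * P) z w := by
          rw [pow_succ', Matrix.mul_assoc, Matrix.mul_apply]
        rw [hrw]
        have hNuv : NX P X u v = P u v := by
          unfold NX; simp only [Matrix.of_apply, if_neg hvX]
        have hterm : 0 < NX P X u v * (NX P X ^ j * P) v w := by
          rw [hNuv]; exact mul_pos h1 hNP
        refine lt_of_lt_of_le hterm (Finset.single_le_sum (f := fun z => NX P X u z * (NX P X ^ j * P) z w) (fun z _ => ?_) (Finset.mem_univ v))
        exact mul_nonneg (NX_nonneg P hPnn X u z)
          (mul_entry_nonneg _ P (pow_entry_nonneg _ (NX_nonneg P hPnn X) j) hPnn z w)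
      · simpa [Nat.succ_sub_succ] using hrest

lemma watched_pos_of_exit (P : Matrix S S ℝ) (hPnn : ∀ s s', 0 ≤ P s s')
    (hProw : ∀ s, ∑ s', P s s' = 1)
    (hirr : ∀ s s', ∃ n : ℕ, 1 ≤ n ∧ 0 < (P ^ n) s s')
    (X : Finset S) (hX : X.Nonempty) {s w : S} {j : ℕ}
    (h : 0 < (NX P X ^ j * P) s w) : 0 < watched P X s w := by
  cases j with
  | zero =>
    refine watched_pos_of_direct P hPnn X ?_
    simpa using h
  | succ j' =>
    refine watched_pos_of_tupSum P hPnn hProw hirr X hX (n := j') ?_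
    rw [tupSum_eq_matrix, ← Matrix.mul_apply]
    exact h

lemma main_aux (P : Matrix S S ℝ) (hPnn : ∀ s s', 0 ≤ P s s')
    (hProw : ∀ s, ∑ s', P s s' = 1)
    (hirr : ∀ s s', ∃ n : ℕ, 1 ≤ n ∧ 0 < (P ^ n) s s')
    (X : Finset S) (hX : X.Nonempty) :
    ∀ m (s s' : S) (hs : s ∈ X) (hs' : s' ∈ X), 1 ≤ m → 0 < (P ^ m) s s' →
      ∃ k : ℕ, 1 ≤ k ∧ 0 < (watchedMatrix P X ^ k) ⟨s, hs⟩ ⟨s', hs'⟩ := by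
  intro m
  induction m using Nat.strong_induction_on with
  | _ m ih =>
    intro s s' hs hs' hm hpos
    obtain ⟨m', rfl⟩ : ∃ m', m = m' + 1 := ⟨m - 1, by omega⟩
    obtain ⟨j, w, hwX, hjm, hNP, hrest⟩ := exists_exit P hPnn X m' s s' hs' hpos
    have hWsw : 0 < watched P X s w := watched_pos_of_exit P hPnn hProw hirr X hX hNP
    rcases Nat.eq_zero_or_pos (m' - j) with hmj | hmj
    · have hw : w = s' := by
        by_contra hne
        rw [hmj] at hrest
        simp [Matrix.one_apply, hne] at hrest
      subst hw
      refine ⟨1, le_refl 1, ?_⟩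
      simpa [pow_one, watchedMatrix] using hWsw
    · have hlt : m' - j < m' + 1 := by omega
      obtain ⟨k, hk1, hkpos⟩ := ih (m' - j) hlt w s' hwX hs' hmj hrest
      refine ⟨k + 1, by omega, ?_⟩
      have hWnn : ∀ a b : X, 0 ≤ watchedMatrix P X a b := fun a b =>
        watched_nonneg P hPnn X a b
      have hrw : (watchedMatrix P X ^ (k + 1)) ⟨s, hs⟩ ⟨s', hs'⟩
          = ∑ z : X, watchedMatrix P X ⟨s, hs⟩ z * (watchedMatrix P X ^ k) z ⟨s', hs'⟩ := by
        rw [pow_succ', Matrix.mul_apply]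
      rw [hrw]
      have hterm : 0 < watchedMatrix P X ⟨s, hs⟩ ⟨w, hwX⟩
          * (watchedMatrix P X ^ k) ⟨w, hwX⟩ ⟨s', hs'⟩ := mul_pos hWsw hkpos
      refine lt_of_lt_of_le hterm (Finset.single_le_sum (f := fun z : X => watchedMatrix P X ⟨s, hs⟩ z * (watchedMatrix P X ^ k) z ⟨s', hs'⟩) (fun z _ => ?_) (Finset.mem_univ (⟨w, hwX⟩ : X)))
      exact mul_nonneg (hWnn _ _) (pow_entry_nonneg _ hWnn k _ _)

end Aux

theorem watched_chain_irreducible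
    {S : Type*} [Fintype S] [DecidableEq S]
    (P : Matrix S S ℝ)
    (hPnn : ∀ s s', 0 ≤ P s s')
    (hProw : ∀ s, ∑ s', P s s' = 1)
    (hirr : ∀ s s', ∃ n : ℕ, 1 ≤ n ∧ 0 < (P ^ n) s s')
    (X : Finset S) (hX : X.Nonempty) :
    ∀ s s' : X, ∃ n : ℕ, 1 ≤ n ∧ 0 < (watchedMatrix P X ^ n) s s' := by
  intro s s'
  obtain ⟨n, hn1, hnpos⟩ := hirr (s : S) (s' : S)
  obtain ⟨k, hk1, hkpos⟩ := main_aux P hPnn hProw hirr X hX n s s' s.2 s'.2 hn1 hnpos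
  exact ⟨k, hk1, by simpa using hkpos⟩
end

section
/- Let S be a finite set, let P be an irreducible stochastic matrix on S in detailed balance with a probability distribution π on S with π_s > 0 for all s, and let X ⊆ S be nonempty with P_{ss} < 1 for every s ∈ S∖X. Define the rejection-free matrix P' by: (P')_{ss'} = P_{ss'} if s ∈ X; (P')_{ss'} = P_{ss'}/(1 − P_{ss}) if s ∈ S∖X and s' ≠ s; and (P')_{ss} = 0 if s ∈ S∖X. Then the watched-chain matrix of P' on X, namely (P̄')_{ss'} := (P')_{ss'} + Σ_{n=0}^∞ Σ_{s_0,…,s_n ∈ S∖X} (P')_{s s_0} (Π_{l=1}^n (P')_{s_{l-1} s_l}) (P')_{s_n s'} for s,s' ∈ X, is in detailed balance with the normalized restriction π̄_s = π_s / Σ_{t∈X} π_t. -/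
/-!
Detailed balance propagates along paths: `μ s Q s s₀ ⋯ Q sₙ s' = μ s' Q s' sₙ ⋯ Q s₀ s`.
Reversing paths thus proves detailed balance term by term in the series defining the watched
chain, for any matrix in detailed balance and any watched set.
The rejection-free matrix is in detailed balance with `pd` rescaled by `1 - P t t` off `X`,
a weight that coincides with `pd` on `X`; the normalisation by `∑ t ∈ X, pd t` is then harmless.
-/

open Finset

/-- The rejection-free modification of `P` outside `X`: identity transitions from states of
`S ∖ X` are forbidden and the remaining transition probabilities are rescaled. -/
noncomputable def rejFree {S : Type*} [Fintype S] [DecidableEq S]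
    (P : Matrix S S ℝ) (X : Finset S) : Matrix S S ℝ :=
  Matrix.of fun s s' =>
    if s ∈ X then P s s'
    else if s' = s then 0 else P s s' / (1 - P s s)

def IsDetailedBalance {S : Type*} (μ : S → ℝ) (Q : Matrix S S ℝ) : Prop :=
  ∀ t u, μ t * Q t u = μ u * Q u t

namespace IsDetailedBalance

variable {S : Type*} {μ : S → ℝ} {Q : Matrix S S ℝ}

theorem mul_prod_path (h : IsDetailedBalance μ Q) :
    ∀ {n : ℕ} (g : Fin (n + 1) → S),
      μ (g 0) * ∏ i : Fin n, Q (g i.castSucc) (g i.succ) =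
        μ (g (Fin.last n)) * ∏ i : Fin n, Q (g i.succ) (g i.castSucc)
  | 0, g => by simp
  | n + 1, g => by
    have ih := h.mul_prod_path (g ∘ Fin.castSucc)
    simp only [Function.comp_apply, Fin.castSucc_zero] at ih
    rw [Fin.prod_univ_castSucc, Fin.prod_univ_castSucc]
    simp only [Fin.succ_castSucc, Fin.succ_last]
    rw [← mul_assoc, ih]
    linear_combination (∏ i : Fin n, Q (g i.succ.castSucc) (g i.castSucc.castSucc)) *
      h (g (Fin.last n).castSucc) (g (Fin.last (n + 1)))

theorem mul_pathWeight (h : IsDetailedBalance μ Q) {n : ℕ} (s s' : S) (f : Fin (n + 1) → S) :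
    μ s * (Q s (f 0) * (∏ i : Fin n, Q (f i.castSucc) (f i.succ)) * Q (f (Fin.last n)) s') =
      μ s' * (Q s' (f (Fin.last n)) * (∏ i : Fin n, Q (f i.succ) (f i.castSucc)) *
        Q (f 0) s) := by
  linear_combination
    (∏ i : Fin n, Q (f i.castSucc) (f i.succ)) * Q (f (Fin.last n)) s' * h s (f 0) +
    Q (f 0) s * Q (f (Fin.last n)) s' * h.mul_prod_path f +
    Q (f 0) s * (∏ i : Fin n, Q (f i.succ) (f i.castSucc)) * h (f (Fin.last n)) s'

theorem mul_tupSum [Fintype S] [DecidableEq S] (h : IsDetailedBalance μ Q) (Y : Finset S)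
    (s s' : S) (n : ℕ) : μ s * tupSum Q Y s s' n = μ s' * tupSum Q Y s' s n := by
  unfold tupSum
  rw [mul_sum, mul_sum]
  refine Fintype.sum_equiv (Fin.revPerm.arrowCongr (Equiv.refl S)) _ _ fun f => ?_
  have hY : (∀ i, f (Fin.rev i) ∈ Y) ↔ ∀ i, f i ∈ Y :=
    (Fin.rev_surjective.forall (p := fun i => f i ∈ Y)).symm
  have hprod : ∏ i : Fin n, Q (f i.castSucc.rev) (f i.succ.rev) =
      ∏ i : Fin n, Q (f i.succ) (f i.castSucc) := by
    simp only [Fin.rev_castSucc, Fin.rev_succ]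
    exact Fintype.prod_equiv Fin.revPerm _ _ fun i => rfl
  simp only [Equiv.arrowCongr_apply, Fin.revPerm_symm, Equiv.coe_refl, Function.comp_apply,
    Fin.revPerm_apply, id_eq, hY, Fin.rev_zero, Fin.rev_last, hprod]
  split_ifs
  · exact h.mul_pathWeight s s' f
  · simp

/-- The identity holds term by term, so it needs no summability of the series in `watched`. -/
theorem mul_watched [Fintype S] [DecidableEq S] (h : IsDetailedBalance μ Q) (X : Finset S)
    (s s' : S) : μ s * watched Q X s s' = μ s' * watched Q X s' s := by
  unfold watched
  rw [mul_add, mul_add, ← tsum_mul_left, ← tsum_mul_left, h s s',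
    tsum_congr (h.mul_tupSum Xᶜ s s')]

end IsDetailedBalance

section RejectionFree

variable {S : Type*} [DecidableEq S]

/-- Outside `X` the rejection-free chain stays in `t` a factor `1 - P t t` less long. -/
noncomputable def rejFreeWeight (P : Matrix S S ℝ) (μ : S → ℝ) (X : Finset S) (t : S) : ℝ :=
  if t ∈ X then μ t else μ t * (1 - P t t)

variable [Fintype S] {P : Matrix S S ℝ} {X : Finset S}

theorem rejFreeWeight_mul_rejFree (μ : S → ℝ) (hdiag : ∀ s ∉ X, P s s < 1) {t u : S}
    (htu : t ≠ u) : rejFreeWeight P μ X t * rejFree P X t u = μ t * P t u := by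
  by_cases ht : t ∈ X
  · simp [rejFreeWeight, rejFree, ht]
  · have hleave : 1 - P t t ≠ 0 := (sub_pos.2 (hdiag t ht)).ne'
    simp only [rejFreeWeight, rejFree, ht, Matrix.of_apply, if_false, Ne.symm htu]
    field_simp

theorem isDetailedBalance_rejFree {μ : S → ℝ} (h : IsDetailedBalance μ P)
    (hdiag : ∀ s ∉ X, P s s < 1) : IsDetailedBalance (rejFreeWeight P μ X) (rejFree P X) := by
  intro t u
  rcases eq_or_ne t u with rfl | htu
  · rfl
  · rw [rejFreeWeight_mul_rejFree μ hdiag htu, rejFreeWeight_mul_rejFree μ hdiag htu.symm, h]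

end RejectionFree

theorem watched_rejection_free_detailed_balance_general
    {S : Type*} [Fintype S] [DecidableEq S]
    (P : Matrix S S ℝ) (pd : S → ℝ)
    (hdb : ∀ s s', pd s * P s s' = pd s' * P s' s)
    (X : Finset S) (hdiag : ∀ s ∉ X, P s s < 1) :
    ∀ s ∈ X, ∀ s' ∈ X,
      (pd s / ∑ t ∈ X, pd t) * watched (rejFree P X) X s s' =
        (pd s' / ∑ t ∈ X, pd t) * watched (rejFree P X) X s' s := by
  intro s hs s' hs'
  have key := (isDetailedBalance_rejFree (X := X) hdb hdiag).mul_watched X s s'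
  simp only [rejFreeWeight, hs, hs', if_true] at key
  rw [div_mul_eq_mul_div, div_mul_eq_mul_div, key]

theorem watched_rejection_free_detailed_balance
    {S : Type*} [Fintype S] [DecidableEq S]
    (P : Matrix S S ℝ) (pd : S → ℝ)
    (hPnn : ∀ s s', 0 ≤ P s s')
    (hProw : ∀ s, ∑ s', P s s' = 1)
    (hirr : ∀ s s', ∃ n : ℕ, 1 ≤ n ∧ 0 < (P ^ n) s s')
    (hpos : ∀ s, 0 < pd s)
    (hsum : ∑ s, pd s = 1)
    (hdb : ∀ s s', pd s * P s s' = pd s' * P s' s)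
    (X : Finset S) (hX : X.Nonempty) (hdiag : ∀ s ∉ X, P s s < 1) :
    ∀ s ∈ X, ∀ s' ∈ X,
      (pd s / ∑ t ∈ X, pd t) * watched (rejFree P X) X s s' =
        (pd s' / ∑ t ∈ X, pd t) * watched (rejFree P X) X s' s :=
  watched_rejection_free_detailed_balance_general P pd hdb X hdiag
end

section
/- Let G = (V,E) be a finite, connected, bipartite, cubic graph and let n > 0 be real. Partition R(G) into: 𝓔 = {(A,u,v) ∈ R(G) : u = v}; 𝓣 = {(A,u,v) ∈ R(G) : u ≠ v, {d_u(A), d_v(A)} = {1,3}}; Θ = {(A,u,v) ∈ R(G) : u ≠ v, d_u(A) = d_v(A) = 3, and no edge of A incident to u is a bridge of (V,A)}; 𝓓 = {(A,u,v) ∈ R(G) : u ≠ v, d_u(A) = d_v(A) = 3, and some edge of A incident to u is a bridge of (V,A)}. Define π on R(G) by π(A,u,v) = n^{c(A)} · w, where c(A) = |A| − |V| + k(A) and w = 1 on 𝓔 ∪ 𝓣, w = 3/n on Θ, w = (n+2)/n on 𝓓. Define P on R(G) whose only nonzero entries are, for uu' ∈ E: P[(A,u,v) → (A △ uu', u', v)]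 = P[(A,v,u) → (A △ uu', v, u')] = 1/2 if (A,u,v) ∈ 𝓔 ∪ 𝓣 and uu' ∉ A; = 1/6 if (A,u,v) ∈ Θ and uu' ∈ A; = n/(2(n+2)) if (A,u,v) ∈ 𝓓, uu' ∈ A and uu' is a bridge of (V,A); = 1/(2(n+2)) if (A,u,v) ∈ 𝓓, uu' ∈ A and uu' is not a bridge of (V,A). Then every row of P sums to 1 (P is a rejection-free stochastic matrix on R(G)), and P is in detailed balance with π: π(s) P[s → s'] = π(s') P[s' → s] for all s, s' ∈ R(G). -/
open Finset

attribute [local instance] Classical.propDecidable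

/-- The degree of a vertex `x` in the spanning subgraph `(V, A)`:
the number of edges of `A` incident to `x`. -/
def degA {V : Type*} [DecidableEq V] (A : Finset (Sym2 V)) (x : V) : ℕ :=
  (A.filter fun e => x ∈ e).card

/-- `(A, u, v)` belongs to the worm state space `S(G)`: `A` is a set of edges of `G`
whose odd-degree vertices are exactly `{u, v}` when `u ≠ v`, and none when `u = v`. -/
def SGstate {V : Type*} [DecidableEq V] (G : SimpleGraph V) [DecidableRel G.Adj] [Fintype V]
    (A : Finset (Sym2 V)) (u v : V) : Prop :=
  A ⊆ G.edgeFinset ∧ ∀ x, Odd (degA A x) ↔ (u ≠ v ∧ (x = u ∨ x = v))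

/-- `(A, u, v)` belongs to the fully-packed worm state space `R(G)`. -/
def RGstate {V : Type*} [DecidableEq V] (G : SimpleGraph V) [DecidableRel G.Adj] [Fintype V]
    (A : Finset (Sym2 V)) (u v : V) : Prop :=
  SGstate G A u v ∧ (∀ x, 1 ≤ degA A x) ∧ 4 ≤ degA A u + degA A v

/-- `e` is a bridge of the spanning subgraph `(V, A)`. -/
def IsBridgeA {V : Type*} [DecidableEq V] (A : Finset (Sym2 V)) (e : Sym2 V) : Prop :=
  (SimpleGraph.fromEdgeSet (↑A : Set (Sym2 V))).IsBridge e

/-- The cyclomatic number `c(A) = |A| - |V| + k(A)` of the spanning subgraph `(V, A)`. -/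
noncomputable def cyc {V : Type*} [Fintype V] [DecidableEq V] (A : Finset (Sym2 V)) : ℤ :=
  (A.card : ℤ) - Fintype.card V +
    Nat.card (SimpleGraph.fromEdgeSet (↑A : Set (Sym2 V))).ConnectedComponent

/-- The class weight `w` of a state `(A, u, v)`: `1` on `𝓔 ∪ 𝓣` (coinciding defects, or
defect degrees `{1, 3}`), `3/n` on `Θ` (both defects of degree 3, no bridge of `(V, A)`
incident to `u`), `(n+2)/n` on `𝓓` (both defects of degree 3, some bridge of `(V, A)`
incident to `u`). -/
noncomputable def classWeight {V : Type*} [Fintype V] [DecidableEq V]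
    (n : ℝ) (A : Finset (Sym2 V)) (u v : V) : ℝ :=
  if u = v ∨ (u ≠ v ∧ (degA A u = 1 ∧ degA A v = 3 ∨ degA A u = 3 ∧ degA A v = 1)) then 1
  else if u ≠ v ∧ degA A u = 3 ∧ degA A v = 3 ∧ ¬∃ e ∈ A, u ∈ e ∧ IsBridgeA A e then 3 / n
  else if u ≠ v ∧ degA A u = 3 ∧ degA A v = 3 ∧ ∃ e ∈ A, u ∈ e ∧ IsBridgeA A e then
    (n + 2) / n
  else 0

/-- The stationary weight `π(A, u, v) = n^{c(A)} ⋅ w` of the FPL worm chain. -/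
noncomputable def fplWeight {V : Type*} [Fintype V] [DecidableEq V]
    (n : ℝ) (p : Finset (Sym2 V) × V × V) : ℝ :=
  n ^ cyc p.1 * classWeight n p.1 p.2.1 p.2.2

/-- The probability with which the defect `a` (whose partner defect is `b`) of the state
`(A, a, b)` traverses the edge `a a'` (toggling it) under the FPL worm transition matrix:
`1/2` on `𝓔 ∪ 𝓣` for a vacant edge, `1/6` on `Θ` for an occupied edge, and on `𝓓`,
`n/(2(n+2))` for an occupied bridge and `1/(2(n+2))` for an occupied non-bridge. -/
noncomputable def fplRate {V : Type*} [Fintype V] [DecidableEq V]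
    (n : ℝ) (A : Finset (Sym2 V)) (a b a' : V) : ℝ :=
  if (a = b ∨ (a ≠ b ∧ (degA A a = 1 ∧ degA A b = 3 ∨ degA A a = 3 ∧ degA A b = 1))) ∧
      s(a, a') ∉ A then 1 / 2
  else if (a ≠ b ∧ degA A a = 3 ∧ degA A b = 3) ∧ s(a, a') ∈ A then
    if ¬∃ e ∈ A, a ∈ e ∧ IsBridgeA A e then 1 / 6
    else if IsBridgeA A s(a, a') then n / (2 * (n + 2))
    else 1 / (2 * (n + 2))
  else 0

/-- The FPL worm transition matrix: from `(A, u, v)`, either defect traverses an edge of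
`G` emanating from it (toggling that edge), with the probabilities of `fplRate`; there are
no other transitions (in particular no identity transitions). -/
noncomputable def fplP {V : Type*} [Fintype V] [DecidableEq V]
    (G : SimpleGraph V) [DecidableRel G.Adj] (n : ℝ)
    (p q : Finset (Sym2 V) × V × V) : ℝ :=
  (if G.Adj p.2.1 q.2.1 ∧ q.2.2 = p.2.2 ∧ q.1 = symmDiff p.1 {s(p.2.1, q.2.1)} then
    fplRate n p.1 p.2.1 p.2.2 q.2.1
  else 0) +
  (if G.Adj p.2.2 q.2.2 ∧ q.2.1 = p.2.1 ∧ q.1 = symmDiff p.1 {s(p.2.2, q.2.2)} then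
    fplRate n p.1 p.2.2 p.2.1 q.2.2
  else 0)


/-!
A state of `R(G)` in a cubic graph lies either in `𝓔 ∪ 𝓣` (defect degrees `{2, 2}` or `{1, 3}`)
or in `Θ ∪ 𝓓` (both defects of degree 3); every other vertex has degree 2. Moves out of `𝓔 ∪ 𝓣`
add a vacant edge and land in `Θ ∪ 𝓓`; moves out of `Θ ∪ 𝓓` delete an edge.

Rows sum to one: from `𝓔 ∪ 𝓣` the defects see `(3 - d_u) + (3 - d_v) = 2` vacant edges, each
taken with probability `1/2`. From `Θ ∪ 𝓓` each defect contributes `3 ⋅ 1/6` or, in `𝓓`,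
`n/(2(n+2)) + 2/(2(n+2))`: every `u`–`v` path crosses each bridge at `u`, so there is exactly
one.

Detailed balance reduces to adding one edge `aa'`: `c(A)` grows by one exactly when `aa'` is not
a bridge of the new graph, and `1/2 = n ⋅ (3/n) ⋅ (1/6) = n ⋅ ((n+2)/n) ⋅ (1/(2(n+2)))
= ((n+2)/n) ⋅ (n/(2(n+2)))`. Moving the second defect needs `π(A, u, v) = π(A, v, u)`: when both
defects have degree 3, a bridge at `u` forces one at `v`, since after deleting it the pendant
edges can be peeled off one by one along a path of bridges that ends at `v`.
-/

namespace Finset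

variable {α : Type*} [DecidableEq α] {s t : Finset α} {x : α}

lemma symmDiff_singleton_of_notMem (hx : x ∉ s) : symmDiff s {x} = insert x s := by
  ext y
  simp only [mem_symmDiff, mem_singleton, mem_insert]
  grind

lemma symmDiff_singleton_of_mem (hx : x ∈ s) : symmDiff s {x} = s.erase x := by
  ext y
  simp only [mem_symmDiff, mem_singleton, mem_erase]
  grind

lemma eq_symmDiff_singleton_comm : t = symmDiff s {x} ↔ s = symmDiff t {x} :=
  ⟨fun h => by rw [h, symmDiff_symmDiff_cancel_right],
    fun h => by rw [h, symmDiff_symmDiff_cancel_right]⟩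

end Finset

namespace SimpleGraph

variable {V : Type*} {H : SimpleGraph V} {a b u v x y : V}

theorem reachable_sup_edge_iff :
    (H ⊔ edge a b).Reachable x y ↔ H.Reachable x y ∨
      (H.Reachable x a ∧ H.Reachable b y) ∨ (H.Reachable x b ∧ H.Reachable a y) := by
  constructor
  · rintro ⟨w⟩
    induction w with
    | nil => exact .inl .rfl
    | @cons x z y hxz _ ih =>
      rcases hxz with hxz | hxz
      · have h := hxz.reachable
        rcases ih with h' | ⟨h₁, h₂⟩ | ⟨h₁, h₂⟩
        exacts [.inl (h.trans h'), .inr (.inl ⟨h.trans h₁, h₂⟩), .inr (.inr ⟨h.trans h₁, h₂⟩)]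
      · obtain ⟨⟨rfl, rfl⟩ | ⟨rfl, rfl⟩, -⟩ := (edge_adj _ _ _ _).mp hxz <;>
          rcases ih with h' | ⟨h₁, h₂⟩ | ⟨h₁, h₂⟩ <;> grind [Reachable.refl, Reachable.trans]
  · have hle : H ≤ H ⊔ edge a b := le_sup_left
    rcases eq_or_ne a b with rfl | hab
    · rintro (h | ⟨h₁, h₂⟩ | ⟨h₁, h₂⟩) <;> grind [Reachable.mono, Reachable.trans]
    have hab' : (H ⊔ edge a b).Reachable a b := Adj.reachable (.inr (by simp [edge_adj, hab]))
    rintro (h | ⟨h₁, h₂⟩ | ⟨h₁, h₂⟩)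
    · exact h.mono hle
    · exact ((h₁.mono hle).trans hab').trans (h₂.mono hle)
    · exact ((h₁.mono hle).trans hab'.symm).trans (h₂.mono hle)

private lemma map_ofLE_sup_edge_mk (v : V) :
    (H.connectedComponentMk v).map (Hom.ofLE (le_sup_left : H ≤ H ⊔ edge a b)) =
      (H ⊔ edge a b).connectedComponentMk v := rfl

theorem card_connectedComponent_sup_edge_of_reachable (hab : H.Reachable a b) :
    Nat.card (H ⊔ edge a b).ConnectedComponent = Nat.card H.ConnectedComponent := by
  refine (Nat.card_eq_of_bijective _
    ⟨?_, ConnectedComponent.surjective_map_ofLE le_sup_left⟩).symm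
  intro c c'
  induction c using ConnectedComponent.ind
  induction c' using ConnectedComponent.ind
  simp only [map_ofLE_sup_edge_mk, ConnectedComponent.eq, reachable_sup_edge_iff]
  grind [Reachable.trans, Reachable.symm]

/-- Joining two components merges exactly the components of `a` and `b`, so the map on
components is a bijection once the component of `b` is left out. -/
theorem card_connectedComponent_sup_edge_of_not_reachable [Finite V]
    (hab : ¬ H.Reachable a b) :
    Nat.card (H ⊔ edge a b).ConnectedComponent + 1 = Nat.card H.ConnectedComponent := by
  let φ : {c : H.ConnectedComponent // c ≠ H.connectedComponentMk b} →
      (H ⊔ edge a b).ConnectedComponent := fun c => c.1.map (Hom.ofLE le_sup_left)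
  have hφ : φ.Bijective := by
    constructor
    · rintro ⟨c, hc⟩ ⟨c', hc'⟩ h
      induction c using ConnectedComponent.ind
      induction c' using ConnectedComponent.ind
      simp only [φ, map_ofLE_sup_edge_mk, ConnectedComponent.eq, reachable_sup_edge_iff,
        ne_eq, Subtype.mk.injEq] at h hc hc' ⊢
      grind [Reachable.trans, Reachable.symm]
    · intro c
      induction c using ConnectedComponent.ind with | h x =>
      by_cases hx : H.Reachable x b
      · refine ⟨⟨H.connectedComponentMk a, by simpa [ConnectedComponent.eq] using hab⟩, ?_⟩
        simp only [φ, map_ofLE_sup_edge_mk, ConnectedComponent.eq, reachable_sup_edge_iff]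
        exact .inr (.inl ⟨.rfl, hx.symm⟩)
      · exact ⟨⟨H.connectedComponentMk x, by simpa [ConnectedComponent.eq] using hx⟩, rfl⟩
  rw [← Nat.card_eq_of_bijective φ hφ, ← Finite.card_option]
  exact Nat.card_congr (Equiv.optionSubtypeNe _)

theorem IsBridge.not_isDiag {e : Sym2 V} (he : H.IsBridge e) : ¬ e.IsDiag := by
  induction e with | h x y =>
  rintro (rfl : x = y)
  exact he .rfl

theorem IsBridge.of_isBridge_deleteEdges {e f : Sym2 V} (he : H.IsBridge e)
    (hf : (H.deleteEdges {e}).IsBridge f) (hfH : f ∈ H.edgeSet) : H.IsBridge f := by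
  obtain rfl | hfe := eq_or_ne f e
  · exact he
  induction e with | h x y =>
  induction f with | h v t =>
  rw [isBridge_iff] at he hf ⊢
  intro hvt
  set K := H.deleteEdges {s(x, y)}
  have hle : H.deleteEdges {s(v, t)} ≤ K.deleteEdges {s(v, t)} ⊔ edge x y := by
    intro p q hpq
    by_cases hpq' : s(p, q) = s(x, y)
    · exact .inr ((edge_adj _ _ _ _).mpr ⟨by simpa [Sym2.eq_iff] using hpq', hpq.ne⟩)
    · exact .inl (by simp_all [K])
  have hadj : K.Adj v t := by simpa [K, hfe] using hfH
  have hK : K.deleteEdges {s(v, t)} ≤ K := deleteEdges_le _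
  rcases reachable_sup_edge_iff.mp (hvt.mono hle) with h | ⟨h₁, h₂⟩ | ⟨h₁, h₂⟩
  · exact hf h
  · exact he (((h₁.mono hK).symm.trans hadj.reachable).trans (h₂.mono hK).symm)
  · exact he (((h₂.mono hK).trans hadj.reachable.symm).trans (h₁.mono hK))

theorem Reachable.eq_of_not_reachable_deleteEdges (huv : H.Reachable u v)
    (hx : ¬ (H.deleteEdges {s(u, x)}).Reachable u v)
    (hy : ¬ (H.deleteEdges {s(u, y)}).Reachable u v) : x = y := by
  obtain ⟨p, hp⟩ := huv.exists_isPath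
  rw [hp.eq_snd_of_mem_edges (p.mem_edges_of_not_reachable_deleteEdges hx),
    hp.eq_snd_of_mem_edges (p.mem_edges_of_not_reachable_deleteEdges hy)]

lemma sum_ite_adj_eq_sum_neighborFinset [Fintype V] {β M : Type*} [Fintype β] [DecidableEq β]
    [AddCommMonoid M] (G : SimpleGraph V) [DecidableRel G.Adj] (u : V) (f : V → β)
    (π : β → V) (hf : ∀ x, π (f x) = x) (r : V → M) :
    ∑ q, (if G.Adj u (π q) ∧ q = f (π q) then r (π q) else 0) =
      ∑ x ∈ G.neighborFinset u, r x := by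
  have hfilter : univ.filter (fun q => G.Adj u (π q) ∧ q = f (π q)) =
      (G.neighborFinset u).image f := by
    ext q
    simp only [mem_filter, mem_univ, true_and, mem_image, mem_neighborFinset]
    constructor
    · rintro ⟨h, hq⟩
      exact ⟨_, h, hq.symm⟩
    · rintro ⟨x, h, rfl⟩
      simp [hf, h]
  rw [← sum_filter, hfilter, sum_image fun x _ y _ hxy => by simpa [hf] using congrArg π hxy]
  simp only [hf]

end SimpleGraph

open SimpleGraph

section EdgeSets

variable {V : Type*} [DecidableEq V] {A B : Finset (Sym2 V)} {e f : Sym2 V} {a b v w x y : V}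

abbrev HasBridgeAt (A : Finset (Sym2 V)) (u : V) : Prop := ∃ e ∈ A, u ∈ e ∧ IsBridgeA A e

lemma degA_insert (he : e ∉ A) (x : V) :
    degA (insert e A) x = degA A x + if x ∈ e then 1 else 0 := by
  unfold degA
  rw [filter_insert]
  split_ifs
  · rw [card_insert_of_notMem (by simp [he])]
  · rfl

lemma degA_erase (he : e ∈ A) (x : V) :
    degA A x = degA (A.erase e) x + if x ∈ e then 1 else 0 := by
  conv_lhs => rw [← insert_erase he]
  exact degA_insert (notMem_erase _ _) x

lemma degA_mono (h : A ⊆ B) (x : V) : degA A x ≤ degA B x :=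
  card_le_card (filter_subset_filter _ h)

lemma degA_pos (he : e ∈ A) (hx : x ∈ e) : 0 < degA A x :=
  card_pos.mpr ⟨e, mem_filter.mpr ⟨he, hx⟩⟩

lemma degA_eq_two (h0 : 0 < degA A x) (h3 : degA A x ≤ 3) (hx : ¬ Odd (degA A x)) :
    degA A x = 2 := by
  rw [Nat.odd_iff] at hx
  omega

lemma eq_of_degA_eq_one (hx : degA A x = 1) (he : e ∈ A) (hxe : x ∈ e) (hf : f ∈ A)
    (hxf : x ∈ f) : e = f := by
  obtain ⟨g, hg⟩ := card_eq_one.mp hx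
  have he' : e ∈ A.filter (x ∈ ·) := mem_filter.mpr ⟨he, hxe⟩
  have hf' : f ∈ A.filter (x ∈ ·) := mem_filter.mpr ⟨hf, hxf⟩
  rw [hg, mem_singleton] at he' hf'
  rw [he', hf']

lemma odd_degA_erase_iff (hodd : ∀ x, Odd (degA A x) ↔ x = a ∨ x = b) (he : s(a, y) ∈ A)
    (hab : a ≠ b) (hay : a ≠ y) (hyb : y ≠ b) (x : V) :
    Odd (degA (A.erase s(a, y)) x) ↔ x = y ∨ x = b := by
  have h := hodd x
  rw [degA_erase he x] at h
  by_cases hx : x ∈ s(a, y)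
  · rw [if_pos hx, Nat.odd_add_one] at h
    rw [← not_iff_not, h]
    rcases Sym2.mem_iff.mp hx with rfl | rfl <;> simp [hab, hay, hyb, Ne.symm hay]
  · rw [if_neg hx, add_zero] at h
    rw [h]
    simp only [Sym2.mem_iff, not_or] at hx
    simp [hx.1, hx.2]

lemma even_card_filter_odd_degA (hA : ∀ e ∈ A, ¬ e.IsDiag) (S : Finset V)
    (hS : ∀ x y, s(x, y) ∈ A → x ∈ S → y ∈ S) : Even #{x ∈ S | Odd (degA A x)} := by
  rw [← even_sum_iff_even_card_odd]
  have hsum : ∑ x ∈ S, degA A x = ∑ e ∈ A, #{x ∈ S | x ∈ e} := by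
    simp only [degA, card_filter]
    exact sum_comm
  rw [hsum]
  refine Finset.even_sum _ fun e he => ?_
  induction e with | h p q =>
  have hpq : p ≠ q := fun h => hA _ he (by simp [h])
  have hiff : p ∈ S ↔ q ∈ S := ⟨hS p q he, hS q p (Sym2.eq_swap ▸ he)⟩
  by_cases hp : p ∈ S
  · have : S.filter (· ∈ s(p, q)) = {p, q} := by
      ext x
      simp only [mem_filter, Sym2.mem_iff, mem_insert, mem_singleton]
      grind
    rw [this, card_pair hpq]
    exact even_two
  · have : S.filter (· ∈ s(p, q)) = ∅ := by
      ext x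
      simp only [mem_filter, Sym2.mem_iff, notMem_empty, iff_false, not_and]
      grind
    rw [this, card_empty]
    exact ⟨0, rfl⟩

/-- A component contains an even number of odd-degree vertices. -/
lemma reachable_of_odd_degA [Fintype V] (hA : ∀ e ∈ A, ¬ e.IsDiag)
    (hodd : ∀ x, Odd (degA A x) ↔ x = a ∨ x = b) :
    (fromEdgeSet (↑A : Set (Sym2 V))).Reachable a b := by
  by_contra hab
  set S : Finset V := univ.filter ((fromEdgeSet (↑A : Set (Sym2 V))).Reachable a)
  have hS : ∀ x y, s(x, y) ∈ A → x ∈ S → y ∈ S := by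
    intro x y hxy hx
    simp only [S, mem_filter, mem_univ, true_and] at hx ⊢
    exact hx.trans (Adj.reachable ⟨hxy, fun h => hA _ hxy (by simp [h])⟩)
  have hodd_S : S.filter (fun x => Odd (degA A x)) = {a} := by
    ext x
    simp only [S, mem_filter, mem_univ, true_and, hodd, mem_singleton]
    constructor
    · rintro ⟨hx, rfl | rfl⟩
      exacts [rfl, absurd hx hab]
    · rintro rfl
      exact ⟨.rfl, .inl rfl⟩
  have := even_card_filter_odd_degA hA S hS
  rw [hodd_S, card_singleton] at this
  exact Nat.not_even_one this

lemma isBridgeA_iff :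
    IsBridgeA A s(a, b) ↔ ¬ (fromEdgeSet (↑(A.erase s(a, b)) : Set (Sym2 V))).Reachable a b := by
  rw [IsBridgeA, isBridge_iff, deleteEdges_fromEdgeSet, coe_erase]

lemma isBridgeA_of_degA_eq_one (he : s(y, w) ∈ A) (hyw : y ≠ w) (hy : degA A y = 1) :
    IsBridgeA A s(y, w) := by
  rw [isBridgeA_iff]
  rintro ⟨p⟩
  cases p with
  | nil => exact hyw rfl
  | cons h _ =>
    simp only [fromEdgeSet_adj, coe_erase, Set.mem_sdiff, mem_coe, Set.mem_singleton_iff] at h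
    exact h.1.2 (eq_of_degA_eq_one hy h.1.1 (by simp) he (by simp))

lemma HasBridgeAt.of_erase (hg : IsBridgeA A e) (h : HasBridgeAt (A.erase e) v) :
    HasBridgeAt A v := by
  obtain ⟨f, hf, hvf, hbr⟩ := h
  refine ⟨f, mem_of_mem_erase hf, hvf, hg.of_isBridge_deleteEdges ?_ ?_⟩
  · rwa [deleteEdges_fromEdgeSet, ← coe_erase]
  · simpa [mem_of_mem_erase hf] using hbr.not_isDiag

lemma not_reachable_deleteEdges_of_isBridgeA [Fintype V] (hA : ∀ e ∈ A, ¬ e.IsDiag)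
    (hodd : ∀ x, Odd (degA A x) ↔ x = a ∨ x = b) (hab : a ≠ b) (he : s(a, y) ∈ A)
    (hbr : IsBridgeA A s(a, y)) :
    ¬ ((fromEdgeSet (↑A : Set (Sym2 V))).deleteEdges {s(a, y)}).Reachable a b := by
  obtain rfl | hyb := eq_or_ne y b
  · exact hbr
  have hay : a ≠ y := fun h => hA _ he (by simp [h])
  have hyb' : (fromEdgeSet (↑(A.erase s(a, y)) : Set (Sym2 V))).Reachable y b :=
    reachable_of_odd_degA (fun e he' => hA e (mem_of_mem_erase he'))
      (odd_degA_erase_iff hodd he hab hay hyb)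
  rw [deleteEdges_fromEdgeSet, ← coe_erase]
  exact fun hab' => isBridgeA_iff.mp hbr (hab'.trans hyb'.symm)

lemma eq_of_isBridgeA [Fintype V] (hA : ∀ e ∈ A, ¬ e.IsDiag)
    (hodd : ∀ x, Odd (degA A x) ↔ x = a ∨ x = b) (hab : a ≠ b) (hx : s(a, x) ∈ A)
    (hy : s(a, y) ∈ A) (hbx : IsBridgeA A s(a, x)) (hby : IsBridgeA A s(a, y)) : x = y :=
  (reachable_of_odd_degA hA hodd).eq_of_not_reachable_deleteEdges
    (not_reachable_deleteEdges_of_isBridgeA hA hodd hab hx hbx)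
    (not_reachable_deleteEdges_of_isBridgeA hA hodd hab hy hby)

/-- Peeling off pendant edges from `y` walks along a path of bridges towards `v`. -/
lemma hasBridgeAt_of_degA_eq_one [Fintype V] (B : Finset (Sym2 V)) {y v : V}
    (hB : ∀ e ∈ B, ¬ e.IsDiag) (hdeg : ∀ x, degA B x ≤ 3)
    (hodd : ∀ x, Odd (degA B x) ↔ x = y ∨ x = v) (hyv : y ≠ v) (hy : degA B y = 1) :
    HasBridgeAt B v := by
  induction B using Finset.strongInduction generalizing y with
  | H B ih =>
  obtain ⟨g, hg⟩ := card_eq_one.mp hy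
  have hgB : g ∈ B ∧ y ∈ g := mem_filter.mp (hg ▸ mem_singleton_self g)
  obtain ⟨w, rfl⟩ := Sym2.mem_iff_exists.mp hgB.2
  have hyw : y ≠ w := fun h => hB _ hgB.1 (by simp [h])
  have hbr := isBridgeA_of_degA_eq_one hgB.1 hyw hy
  obtain rfl | hwv := eq_or_ne w v
  · exact ⟨_, hgB.1, by simp, hbr⟩
  have hw : degA B w = 2 :=
    degA_eq_two (degA_pos hgB.1 (by simp)) (hdeg w) (mt (hodd w).mp (by tauto))
  refine HasBridgeAt.of_erase hbr (ih _ (erase_ssubset hgB.1)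
    (fun e he => hB e (mem_of_mem_erase he))
    (fun x => (degA_mono (erase_subset _ _) x).trans (hdeg x))
    (odd_degA_erase_iff hodd hgB.1 hyv hyw hwv) hwv ?_)
  have := degA_erase hgB.1 w
  simp_all

lemma hasBridgeAt_iff_of_odd_degA [Fintype V] (hA : ∀ e ∈ A, ¬ e.IsDiag)
    (hdeg : ∀ x, degA A x ≤ 3) (hodd : ∀ x, Odd (degA A x) ↔ x = a ∨ x = b) (hab : a ≠ b) :
    HasBridgeAt A a ↔ HasBridgeAt A b := by
  suffices key : ∀ a b, (∀ x, Odd (degA A x) ↔ x = a ∨ x = b) → a ≠ b →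
      HasBridgeAt A a → HasBridgeAt A b from
    ⟨key a b hodd hab, key b a (fun x => (hodd x).trans or_comm) hab.symm⟩
  intro a b hodd hab ⟨e, he, hae, hbr⟩
  obtain ⟨y, rfl⟩ := Sym2.mem_iff_exists.mp hae
  obtain rfl | hyb := eq_or_ne y b
  · exact ⟨_, he, by simp, hbr⟩
  have hay : a ≠ y := fun h => hA _ he (by simp [h])
  have hy : degA A y = 2 :=
    degA_eq_two (degA_pos he (by simp)) (hdeg y) (mt (hodd y).mp (by tauto))
  refine HasBridgeAt.of_erase hbr (hasBridgeAt_of_degA_eq_one _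
    (fun e he' => hA e (mem_of_mem_erase he'))
    (fun x => (degA_mono (erase_subset _ _) x).trans (hdeg x))
    (odd_degA_erase_iff hodd he hab hay hyb) hyb ?_)
  have := degA_erase he y
  simp_all

lemma fromEdgeSet_insert :
    fromEdgeSet (↑(insert s(a, b) A) : Set (Sym2 V)) = fromEdgeSet ↑A ⊔ edge a b := by
  rw [edge, ← fromEdgeSet_union, coe_insert, Set.insert_eq, Set.union_comm]

lemma isBridgeA_insert_self (he : s(a, b) ∉ A) :
    IsBridgeA (insert s(a, b) A) s(a, b) ↔
      ¬ (fromEdgeSet (↑A : Set (Sym2 V))).Reachable a b := by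
  rw [isBridgeA_iff, erase_insert he]

lemma cyc_insert [Fintype V] (he : s(a, b) ∉ A) :
    cyc (insert s(a, b) A) =
      cyc A + if (fromEdgeSet (↑A : Set (Sym2 V))).Reachable a b then 1 else 0 := by
  unfold cyc
  rw [card_insert_of_notMem he, fromEdgeSet_insert]
  split_ifs with h
  · rw [card_connectedComponent_sup_edge_of_reachable h]
    push_cast
    ring
  · rw [← card_connectedComponent_sup_edge_of_not_reachable h]
    push_cast
    ring

end EdgeSets

section Classes

variable {V : Type*} [DecidableEq V] {A : Finset (Sym2 V)} {n : ℝ} {a b u v x : V}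

abbrev IsEorT (A : Finset (Sym2 V)) (u v : V) : Prop :=
  u = v ∨ (u ≠ v ∧ (degA A u = 1 ∧ degA A v = 3 ∨ degA A u = 3 ∧ degA A v = 1))

abbrev IsThetaOrD (A : Finset (Sym2 V)) (u v : V) : Prop :=
  u ≠ v ∧ degA A u = 3 ∧ degA A v = 3

lemma IsEorT.not_isThetaOrD (h : IsEorT A u v) : ¬ IsThetaOrD A u v := by
  rintro ⟨huv, hu, hv⟩
  rcases h with h | ⟨-, h | h⟩
  exacts [huv h, by omega, by omega]

lemma IsEorT.symm (h : IsEorT A u v) : IsEorT A v u := by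
  unfold IsEorT at h ⊢
  grind

lemma IsThetaOrD.symm (h : IsThetaOrD A u v) : IsThetaOrD A v u :=
  ⟨h.1.symm, h.2.2, h.2.1⟩

variable [Fintype V]

lemma classWeight_of_isEorT (h : IsEorT A u v) : classWeight n A u v = 1 :=
  if_pos h

lemma classWeight_of_isThetaOrD (h : IsThetaOrD A u v) :
    classWeight n A u v = if HasBridgeAt A u then (n + 2) / n else 3 / n := by
  obtain ⟨huv, hu, hv⟩ := h
  unfold classWeight
  rw [if_neg fun hE => IsEorT.not_isThetaOrD hE ⟨huv, hu, hv⟩]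
  by_cases hb : HasBridgeAt A u
  · rw [if_neg fun h => h.2.2.2 hb, if_pos ⟨huv, hu, hv, hb⟩, if_pos hb]
  · rw [if_pos ⟨huv, hu, hv, hb⟩, if_neg hb]

lemma fplRate_of_isEorT (h : IsEorT A a b) :
    fplRate n A a b x = if s(a, x) ∈ A then 0 else 1 / 2 := by
  unfold fplRate
  by_cases hx : s(a, x) ∈ A
  · rw [if_neg fun h => h.2 hx, if_neg fun h' => h.not_isThetaOrD h'.1, if_pos hx]
  · rw [if_pos ⟨h, hx⟩, if_neg hx]

lemma fplRate_of_isThetaOrD (h : IsThetaOrD A a b) (hx : s(a, x) ∈ A) :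
    fplRate n A a b x = if HasBridgeAt A a then
      (if IsBridgeA A s(a, x) then n / (2 * (n + 2)) else 1 / (2 * (n + 2))) else 1 / 6 := by
  unfold fplRate
  rw [if_neg fun h => h.2 hx, if_pos ⟨h, hx⟩]
  by_cases hb : HasBridgeAt A a
  · rw [if_neg (not_not.mpr hb), if_pos hb]
  · rw [if_pos hb, if_neg hb]

end Classes

section States

variable {V : Type*} [Fintype V] [DecidableEq V] {G : SimpleGraph V} [DecidableRel G.Adj]
  {A : Finset (Sym2 V)} {n : ℝ} {a a' b u v x : V}

lemma card_filter_neighborFinset_mem (hA : A ⊆ G.edgeFinset) (u : V) :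
    #{x ∈ G.neighborFinset u | s(u, x) ∈ A} = degA A u := by
  refine card_bij (fun x _ => s(u, x)) (fun x hx => ?_)
    (fun x _ y _ h => Sym2.congr_right.mp h) (fun e he => ?_)
  · exact mem_filter.mpr ⟨(mem_filter.mp hx).2, Sym2.mem_mk_left _ _⟩
  · obtain ⟨heA, hue⟩ := mem_filter.mp he
    obtain ⟨x, rfl⟩ := Sym2.mem_iff_exists.mp hue
    exact ⟨x, mem_filter.mpr
      ⟨(mem_neighborFinset _ _ _).mpr (mem_edgeFinset.mp (hA heA)), heA⟩, rfl⟩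

lemma degA_le_degree (hA : A ⊆ G.edgeFinset) (u : V) : degA A u ≤ G.degree u := by
  rw [← card_filter_neighborFinset_mem hA, ← card_neighborFinset_eq_degree]
  exact card_filter_le _ _

lemma mem_of_degA_eq_degree (hA : A ⊆ G.edgeFinset) (hu : degA A u = G.degree u)
    (hx : G.Adj u x) : s(u, x) ∈ A := by
  rw [← card_filter_neighborFinset_mem hA, ← card_neighborFinset_eq_degree] at hu
  exact filter_card_eq hu x ((mem_neighborFinset _ _ _).mpr hx)

lemma sum_fplP_eq (G : SimpleGraph V) [DecidableRel G.Adj] (n : ℝ) (A : Finset (Sym2 V))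
    (u v : V) :
    ∑ q, fplP G n (A, u, v) q =
      ∑ x ∈ G.neighborFinset u, fplRate n A u v x +
        ∑ x ∈ G.neighborFinset v, fplRate n A v u x := by
  simp only [fplP, sum_add_distrib]
  congr 1
  · rw [← sum_ite_adj_eq_sum_neighborFinset G u (fun x => (symmDiff A {s(u, x)}, x, v))
      (fun q => q.2.1) fun _ => rfl]
    refine sum_congr rfl fun ⟨B, x, y⟩ _ => if_congr ?_ rfl rfl
    simp only [Prod.mk.injEq]
    tauto
  · rw [← sum_ite_adj_eq_sum_neighborFinset G v (fun x => (symmDiff A {s(v, x)}, u, x))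
      (fun q => q.2.2) fun _ => rfl]
    refine sum_congr rfl fun ⟨B, x, y⟩ _ => if_congr ?_ rfl rfl
    simp only [Prod.mk.injEq]
    tauto

lemma sum_fplRate_of_isEorT (hcubic : ∀ w, G.degree w = 3) (hA : A ⊆ G.edgeFinset)
    (h : IsEorT A u v) :
    ∑ x ∈ G.neighborFinset u, fplRate n A u v x = (3 - degA A u) / 2 := by
  have hcard := card_filter_add_card_filter_not (s := G.neighborFinset u)
    (fun x => s(u, x) ∈ A)
  rw [card_filter_neighborFinset_mem hA, card_neighborFinset_eq_degree, hcubic] at hcard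
  rw [sum_congr rfl fun x _ => fplRate_of_isEorT h, sum_ite, sum_const_zero, sum_const,
    zero_add, nsmul_eq_mul, show (#{x ∈ G.neighborFinset u | s(u, x) ∉ A} : ℝ) =
      3 - degA A u by rw [eq_sub_iff_add_eq', ← Nat.cast_add, hcard, Nat.cast_ofNat]]
  ring

namespace RGstate

lemma symm (h : RGstate G A u v) : RGstate G A v u := by
  obtain ⟨⟨hA, hodd⟩, hpos, hsum⟩ := h
  exact ⟨⟨hA, fun x => (hodd x).trans (by grind)⟩, hpos, by omega⟩

lemma not_isDiag (h : RGstate G A u v) : ∀ e ∈ A, ¬ e.IsDiag :=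
  fun _ he => G.not_isDiag_of_mem_edgeSet (mem_edgeFinset.mp (h.1.1 he))

lemma odd_degA_iff (h : RGstate G A u v) (huv : u ≠ v) (x : V) :
    Odd (degA A x) ↔ x = u ∨ x = v :=
  (h.1.2 x).trans (and_iff_right huv)

variable (hcubic : ∀ w, G.degree w = 3)
include hcubic

lemma degA_le_three (h : RGstate G A u v) (x : V) : degA A x ≤ 3 :=
  hcubic x ▸ degA_le_degree h.1.1 x

lemma degA_eq_two_of_not_odd (h : RGstate G A u v) (hx : ¬ Odd (degA A x)) :
    degA A x = 2 :=
  degA_eq_two (h.2.1 x) (h.degA_le_three hcubic x) hx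

lemma isEorT_or_isThetaOrD (h : RGstate G A u v) : IsEorT A u v ∨ IsThetaOrD A u v := by
  obtain rfl | huv := eq_or_ne u v
  · exact .inl (.inl rfl)
  have hu := (h.odd_degA_iff huv u).mpr (.inl rfl)
  have hv := (h.odd_degA_iff huv v).mpr (.inr rfl)
  have := h.2.2
  have := h.degA_le_three hcubic u
  have := h.degA_le_three hcubic v
  rw [Nat.odd_iff] at hu hv
  simp only [IsEorT, IsThetaOrD, huv, ne_eq, not_false_eq_true, true_and, false_or]
  omega

lemma degA_add_degA_of_isEorT (h : RGstate G A u v) (hE : IsEorT A u v) :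
    degA A u + degA A v = 4 := by
  rcases hE with rfl | ⟨-, hE⟩
  · rw [h.degA_eq_two_of_not_odd hcubic fun hu => ((h.1.2 u).mp hu).1 rfl]
  · omega

lemma hasBridgeAt_iff (h : RGstate G A u v) (huv : u ≠ v) :
    HasBridgeAt A u ↔ HasBridgeAt A v :=
  hasBridgeAt_iff_of_odd_degA h.not_isDiag (h.degA_le_three hcubic) (h.odd_degA_iff huv) huv

lemma classWeight_comm (h : RGstate G A u v) (n : ℝ) :
    classWeight n A u v = classWeight n A v u := by
  rcases h.isEorT_or_isThetaOrD hcubic with hE | hT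
  · rw [classWeight_of_isEorT hE, classWeight_of_isEorT hE.symm]
  · rw [classWeight_of_isThetaOrD hT, classWeight_of_isThetaOrD hT.symm]
    simp only [h.hasBridgeAt_iff hcubic hT.1]

lemma mem_of_isThetaOrD (h : RGstate G A u v) (hT : IsThetaOrD A u v)
    (hx : x ∈ G.neighborFinset u) : s(u, x) ∈ A :=
  mem_of_degA_eq_degree h.1.1 (by rw [hT.2.1, hcubic]) ((mem_neighborFinset _ _ _).mp hx)

lemma card_filter_isBridgeA (h : RGstate G A u v) (hT : IsThetaOrD A u v)
    (hb : HasBridgeAt A u) : #{x ∈ G.neighborFinset u | IsBridgeA A s(u, x)} = 1 := by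
  obtain ⟨e, he, hue, hbr⟩ := hb
  obtain ⟨w, rfl⟩ := Sym2.mem_iff_exists.mp hue
  refine card_eq_one.mpr ⟨w, ext fun x => ⟨fun hx => ?_, fun hx => ?_⟩⟩
  · obtain ⟨hxN, hxbr⟩ := mem_filter.mp hx
    exact mem_singleton.mpr (eq_of_isBridgeA h.not_isDiag (h.odd_degA_iff hT.1) hT.1
      (h.mem_of_isThetaOrD hcubic hT hxN) he hxbr hbr)
  · rw [mem_singleton.mp hx]
    exact mem_filter.mpr ⟨(mem_neighborFinset _ _ _).mpr (mem_edgeFinset.mp (h.1.1 he)), hbr⟩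

lemma sum_fplRate_of_isThetaOrD (h : RGstate G A u v) (hT : IsThetaOrD A u v)
    (hn : n + 2 ≠ 0) : ∑ x ∈ G.neighborFinset u, fplRate n A u v x = 1 / 2 := by
  rw [sum_congr rfl fun x hx => fplRate_of_isThetaOrD hT (h.mem_of_isThetaOrD hcubic hT hx)]
  by_cases hb : HasBridgeAt A u
  · have hcard := card_filter_add_card_filter_not (s := G.neighborFinset u)
      (fun x => IsBridgeA A s(u, x))
    rw [h.card_filter_isBridgeA hcubic hT hb, card_neighborFinset_eq_degree, hcubic] at hcard
    simp only [if_pos hb]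
    rw [sum_ite, sum_const, sum_const, h.card_filter_isBridgeA hcubic hT hb,
      (by omega : #{x ∈ G.neighborFinset u | ¬IsBridgeA A s(u, x)} = 2), one_smul,
      nsmul_eq_mul]
    field_simp
    ring
  · simp only [if_neg hb, sum_const, card_neighborFinset_eq_degree, hcubic]
    norm_num

theorem sum_fplP_eq_one (h : RGstate G A u v) (hn : 0 < n) :
    ∑ q, fplP G n (A, u, v) q = 1 := by
  rw [sum_fplP_eq]
  rcases h.isEorT_or_isThetaOrD hcubic with hE | hT
  · rw [sum_fplRate_of_isEorT hcubic h.1.1 hE, sum_fplRate_of_isEorT hcubic h.1.1 hE.symm]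
    have : (degA A u : ℝ) + degA A v = 4 := by
      exact_mod_cast h.degA_add_degA_of_isEorT hcubic hE
    linarith
  · rw [h.sum_fplRate_of_isThetaOrD hcubic hT (by linarith),
      h.symm.sum_fplRate_of_isThetaOrD hcubic hT.symm (by linarith)]
    norm_num

lemma isEorT_and_isThetaOrD_insert (h : RGstate G A a b) (hadj : G.Adj a a')
    (he : s(a, a') ∉ A) : IsEorT A a b ∧ IsThetaOrD (insert s(a, a') A) a' b := by
  have hda : degA A a ≠ 3 := fun h3 =>
    he (mem_of_degA_eq_degree h.1.1 (by rw [h3, hcubic]) hadj)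
  have hE : IsEorT A a b :=
    (h.isEorT_or_isThetaOrD hcubic).resolve_right fun hT => hda hT.2.1
  have hdeg := degA_insert he
  have hle : ∀ x, degA (insert s(a, a') A) x ≤ 3 := fun x =>
    hcubic x ▸ degA_le_degree (insert_subset (mem_edgeFinset.mpr hadj) h.1.1) x
  have ha'b : a' ≠ b := by
    rintro rfl
    have := hle a'
    rw [hdeg, if_pos (Sym2.mem_mk_right _ _)] at this
    rcases hE with rfl | ⟨-, hE | hE⟩
    exacts [hadj.ne rfl, by omega, by omega]
  have ha' : degA A a' = 2 := h.degA_eq_two_of_not_odd hcubic fun ho =>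
    ((h.1.2 a').mp ho).2.elim hadj.ne.symm ha'b
  refine ⟨hE, ha'b, by rw [hdeg, if_pos (Sym2.mem_mk_right _ _), ha'], ?_⟩
  rcases hE with rfl | ⟨hab, hE⟩
  · rw [hdeg, if_pos (Sym2.mem_mk_left _ _),
      h.degA_eq_two_of_not_odd hcubic fun ho => ((h.1.2 a).mp ho).1 rfl]
  · rw [hdeg, if_neg (by simp [hab.symm, ha'b.symm])]
    omega

lemma weight_mul_rate_insert (h : RGstate G A a b) (hn : 0 < n) (hadj : G.Adj a a')
    (he : s(a, a') ∉ A) :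
    n ^ cyc A * classWeight n A a b * fplRate n A a b a' =
      n ^ cyc (insert s(a, a') A) * classWeight n (insert s(a, a') A) a' b *
        fplRate n (insert s(a, a') A) a' b a := by
  obtain ⟨hE, hT⟩ := h.isEorT_and_isThetaOrD_insert hcubic hadj he
  have hbr : IsBridgeA (insert s(a, a') A) s(a', a) ↔
      ¬ (fromEdgeSet (↑A : Set (Sym2 V))).Reachable a a' := by
    rw [Sym2.eq_swap (a := a')]
    exact isBridgeA_insert_self he
  rw [classWeight_of_isEorT hE, fplRate_of_isEorT hE, if_neg he, classWeight_of_isThetaOrD hT,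
    fplRate_of_isThetaOrD hT (by simp [Sym2.eq_swap]), cyc_insert he]
  by_cases hr : (fromEdgeSet (↑A : Set (Sym2 V))).Reachable a a'
  · rw [if_pos hr, zpow_add_one₀ hn.ne']
    simp only [hbr, hr, not_true_eq_false, if_false]
    split_ifs
    · field_simp
    · field_simp
      norm_num
  · have hb : HasBridgeAt (insert s(a, a') A) a' :=
      ⟨s(a, a'), mem_insert_self _ _, Sym2.mem_mk_right _ _, (isBridgeA_insert_self he).mpr hr⟩
    rw [if_neg hr, add_zero, if_pos hb, if_pos hb, if_pos (hbr.mpr hr)]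
    field_simp

lemma weight_mul_rate_symmDiff (hp : RGstate G A a b)
    (hq : RGstate G (symmDiff A {s(a, a')}) a' b) (hn : 0 < n) (hadj : G.Adj a a') :
    n ^ cyc A * classWeight n A a b * fplRate n A a b a' =
      n ^ cyc (symmDiff A {s(a, a')}) * classWeight n (symmDiff A {s(a, a')}) a' b *
        fplRate n (symmDiff A {s(a, a')}) a' b a := by
  by_cases he : s(a, a') ∈ A
  · rw [symmDiff_singleton_of_mem he] at hq ⊢
    have key := hq.weight_mul_rate_insert hcubic hn hadj.symm
      (by rw [Sym2.eq_swap]; exact notMem_erase _ _)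
    rw [show s(a', a) = s(a, a') from Sym2.eq_swap, insert_erase he] at key
    exact key.symm
  · rw [symmDiff_singleton_of_notMem he] at hq ⊢
    exact hp.weight_mul_rate_insert hcubic hn hadj he

theorem fplWeight_mul_fplP_comm {B : Finset (Sym2 V)} {x y : V}
    (hp : RGstate G A u v) (hq : RGstate G B x y) (hn : 0 < n) :
    fplWeight n (A, u, v) * fplP G n (A, u, v) (B, x, y) =
      fplWeight n (B, x, y) * fplP G n (B, x, y) (A, u, v) := by
  simp only [fplWeight, fplP, mul_add]
  congr 1
  · by_cases hmove : G.Adj u x ∧ y = v ∧ B = symmDiff A {s(u, x)}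
    · obtain ⟨hadj, rfl, rfl⟩ := hmove
      rw [if_pos ⟨hadj, rfl, rfl⟩, if_pos ⟨hadj.symm, rfl,
        by rw [Sym2.eq_swap, symmDiff_symmDiff_cancel_right]⟩]
      exact hp.weight_mul_rate_symmDiff hcubic hq hn hadj
    · rw [if_neg hmove, if_neg fun h => hmove ⟨h.1.symm, h.2.1.symm,
        by rw [eq_symmDiff_singleton_comm, h.2.2, Sym2.eq_swap]⟩, mul_zero, mul_zero]
  · by_cases hmove : G.Adj v y ∧ x = u ∧ B = symmDiff A {s(v, y)}
    · obtain ⟨hadj, rfl, rfl⟩ := hmove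
      rw [if_pos ⟨hadj, rfl, rfl⟩, if_pos ⟨hadj.symm, rfl,
        by rw [Sym2.eq_swap, symmDiff_symmDiff_cancel_right]⟩,
        hp.classWeight_comm hcubic, hq.classWeight_comm hcubic]
      exact hp.symm.weight_mul_rate_symmDiff hcubic hq.symm hn hadj
    · rw [if_neg hmove, if_neg fun h => hmove ⟨h.1.symm, h.2.1.symm,
        by rw [eq_symmDiff_singleton_comm, h.2.2, Sym2.eq_swap]⟩, mul_zero, mul_zero]

end RGstate

end States

theorem fpl_worm_transition_matrix_stochastic_and_detailed_balance_general
    {V : Type*} [Fintype V] [DecidableEq V]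
    (G : SimpleGraph V) [DecidableRel G.Adj]
    (hcubic : ∀ w, G.degree w = 3)
    (n : ℝ) (hn : 0 < n) :
    (∀ p : Finset (Sym2 V) × V × V, RGstate G p.1 p.2.1 p.2.2 →
      ∑ q : Finset (Sym2 V) × V × V, fplP G n p q = 1) ∧
    (∀ p q : Finset (Sym2 V) × V × V,
      RGstate G p.1 p.2.1 p.2.2 → RGstate G q.1 q.2.1 q.2.2 →
      fplWeight n p * fplP G n p q = fplWeight n q * fplP G n q p) :=
  ⟨fun ⟨_, _, _⟩ hp => hp.sum_fplP_eq_one hcubic hn,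
    fun ⟨_, _, _⟩ ⟨_, _, _⟩ hp hq => hp.fplWeight_mul_fplP_comm hcubic hq hn⟩

theorem fpl_worm_transition_matrix_stochastic_and_detailed_balance
    {V : Type*} [Fintype V] [DecidableEq V]
    (G : SimpleGraph V) [DecidableRel G.Adj]
    (hconn : G.Connected) (hbip : G.Colorable 2)
    (hcubic : ∀ w, G.degree w = 3)
    (n : ℝ) (hn : 0 < n) :
    (∀ p : Finset (Sym2 V) × V × V, RGstate G p.1 p.2.1 p.2.2 →
      ∑ q : Finset (Sym2 V) × V × V, fplP G n p q = 1) ∧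
    (∀ p q : Finset (Sym2 V) × V × V,
      RGstate G p.1 p.2.1 p.2.2 → RGstate G q.1 q.2.1 q.2.2 →
      fplWeight n p * fplP G n p q = fplWeight n q * fplP G n q p) :=
  fpl_worm_transition_matrix_stochastic_and_detailed_balance_general G hcubic n hn
end
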